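/- arXiv:math/0505615 — 2 statements merged into one kernel-verified Lean document; each statement's English description precedes it below -/
import Mathlib

section
/- Let U ⊆ ℂ² be open and ρ : U → ℝ of class C² with ρ(z) > 0 and Levi matrix H(ρ)(z) positive definite at a point z ∈ U, and let Z(z) be the complex gradient of ρ at z. Then det H(log ρ)(z) = 0 (i.e. log ρ satisfies the homogeneous complex Monge–Ampère equation (dd^c log ρ)² = 0 at z) if and only if Z(ρ)(z) := Σ_μ Z^μ(z)·∂ρ/∂z_μ(z) = ρ(z). -/
/-! With `r = ρ z`, `a = ∂ρ`, `b = ∂̄ρ` and `L = H(ρ)(z)`, the quotient rule gives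
`H(log ρ)(z) = r⁻¹ (L - r⁻¹ a bᵀ)`, a rank-one perturbation of `L`. By the matrix determinant
lemma its determinant is `r⁻ⁿ det L (1 - r⁻¹ b L⁻¹ a)`, and `b L⁻¹ = Z`, so it vanishes exactly
when `Z · a = r`. -/

open Complex Matrix
open scoped ComplexOrder

/-- The Wirtinger derivative `∂f/∂z_μ` of an `ℝ`-differentiable function `f : ℂⁿ → ℂ`. -/
noncomputable def wD {n : ℕ} (f : (Fin n → ℂ) → ℂ) (z : Fin n → ℂ) (μ : Fin n) : ℂ :=
  (1 / 2 : ℂ) *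
    (fderiv ℝ f z (Pi.single μ 1) - Complex.I * fderiv ℝ f z (Pi.single μ Complex.I))

/-- The conjugate Wirtinger derivative `∂f/∂z̄_μ`. -/
noncomputable def wDbar {n : ℕ} (f : (Fin n → ℂ) → ℂ) (z : Fin n → ℂ) (μ : Fin n) : ℂ :=
  (1 / 2 : ℂ) *
    (fderiv ℝ f z (Pi.single μ 1) + Complex.I * fderiv ℝ f z (Pi.single μ Complex.I))

/-- The Levi matrix `ρ_{μν̄} = ∂²ρ/∂z_μ∂z̄_ν` of a real-valued function `ρ : ℂⁿ → ℝ`. -/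
noncomputable def levi {n : ℕ} (ρ : (Fin n → ℂ) → ℝ) (z : Fin n → ℂ) :
    Matrix (Fin n) (Fin n) ℂ :=
  Matrix.of fun μ ν => wD (fun w => wDbar (fun w' => (ρ w' : ℂ)) w ν) z μ

namespace Matrix

variable {n R : Type*} [Fintype n] [DecidableEq n] [CommRing R]

theorem det_sub_vecMulVec_of_vecMul_eq {A : Matrix n n R} (hA : IsUnit A.det) {Z b : n → R}
    (hZ : Z ᵥ* A = b) (a : n → R) :
    (A - vecMulVec a b).det = A.det * (1 - Z ⬝ᵥ a) := by
  have hZ' : b ᵥ* A⁻¹ = Z := by rw [← hZ, vecMul_vecMul, mul_nonsing_inv A hA, vecMul_one]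
  rw [sub_eq_add_neg, ← neg_vecMulVec, vecMulVec_eq Unit, det_add_replicateCol_mul_replicateRow hA,
    ← replicateRow_vecMul, hZ', det_unique (n := Unit)]
  simp [sub_eq_add_neg]

end Matrix

section Wirtinger

variable {n : ℕ} {f g : (Fin n → ℂ) → ℂ} {z : Fin n → ℂ}

theorem Filter.EventuallyEq.wD_eq (h : f =ᶠ[nhds z] g) : wD f z = wD g z := by
  unfold wD; rw [h.fderiv_eq]

theorem wD_mul (hf : DifferentiableAt ℝ f z) (hg : DifferentiableAt ℝ g z) (μ : Fin n) :
    wD (fun w => f w * g w) z μ = wD f z μ * g z + f z * wD g z μ := by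
  unfold wD
  rw [fderiv_fun_mul hf hg]
  simp only [_root_.add_apply, _root_.smul_apply, smul_eq_mul]
  ring

theorem ContDiffAt.differentiableAt_wDbar (hf : ContDiffAt ℝ 2 f z) (ν : Fin n) :
    DifferentiableAt ℝ (fun w => wDbar f w ν) z := by
  have hDf : DifferentiableAt ℝ (fderiv ℝ f) z :=
    (hf.fderiv_right (m := 1) le_rfl).differentiableAt one_ne_zero
  unfold wDbar
  fun_prop

variable {ρ : (Fin n → ℂ) → ℝ} {φ : ℝ → ℝ}

theorem hasFDerivAt_ofReal_comp (hφ : DifferentiableAt ℝ φ (ρ z)) (hρ : DifferentiableAt ℝ ρ z) :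
    HasFDerivAt (fun w => (φ (ρ w) : ℂ))
      (((deriv φ (ρ z) : ℝ) : ℂ) • fderiv ℝ (fun w => (ρ w : ℂ)) z) z := by
  have hρc : HasFDerivAt (fun w => (ρ w : ℂ)) (ofRealCLM.comp (fderiv ℝ ρ z)) z :=
    ofRealCLM.hasFDerivAt.comp z hρ.hasFDerivAt
  rw [hρc.fderiv]
  refine (ofRealCLM.hasFDerivAt.comp z
    (hφ.hasDerivAt.comp_hasFDerivAt z hρ.hasFDerivAt)).congr_fderiv ?_
  ext v
  simp

theorem wD_ofReal_comp (hφ : DifferentiableAt ℝ φ (ρ z)) (hρ : DifferentiableAt ℝ ρ z)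
    (μ : Fin n) :
    wD (fun w => (φ (ρ w) : ℂ)) z μ = ((deriv φ (ρ z) : ℝ) : ℂ) * wD (fun w => (ρ w : ℂ)) z μ := by
  unfold wD
  rw [(hasFDerivAt_ofReal_comp hφ hρ).fderiv]
  simp only [_root_.smul_apply, smul_eq_mul]
  ring

theorem wDbar_ofReal_comp (hφ : DifferentiableAt ℝ φ (ρ z)) (hρ : DifferentiableAt ℝ ρ z)
    (ν : Fin n) :
    wDbar (fun w => (φ (ρ w) : ℂ)) z ν =
      ((deriv φ (ρ z) : ℝ) : ℂ) * wDbar (fun w => (ρ w : ℂ)) z ν := by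
  unfold wDbar
  rw [(hasFDerivAt_ofReal_comp hφ hρ).fderiv]
  simp only [_root_.smul_apply, smul_eq_mul]
  ring

end Wirtinger

theorem levi_log_apply {n : ℕ} {ρ : (Fin n → ℂ) → ℝ} {z : Fin n → ℂ} (hρ : ContDiffAt ℝ 2 ρ z)
    (hpos : 0 < ρ z) (μ ν : Fin n) :
    levi (fun w => Real.log (ρ w)) z μ ν =
      (ρ z : ℂ)⁻¹ * levi ρ z μ ν -
        ((ρ z : ℂ) ^ 2)⁻¹ * wD (fun w => (ρ w : ℂ)) z μ * wDbar (fun w => (ρ w : ℂ)) z ν := by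
  have hρz : DifferentiableAt ℝ ρ z := hρ.differentiableAt two_ne_zero
  -- `∂(∂̄ log ρ)` at `z` depends on `∂̄ log ρ` near `z`, so the chain rule is applied on a
  -- neighbourhood, where `ρ` is still positive and differentiable.
  have hlog : (fun w => wDbar (fun w' => (Real.log (ρ w') : ℂ)) w ν) =ᶠ[nhds z]
      fun w => ((ρ w)⁻¹ : ℝ) * wDbar (fun w' => (ρ w' : ℂ)) w ν := by
    filter_upwards [hρ.eventually (by simp), hρ.continuousAt.eventually (lt_mem_nhds hpos)]
      with w hw hw_pos
    rw [wDbar_ofReal_comp (Real.differentiableAt_log hw_pos.ne') (hw.differentiableAt two_ne_zero),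
      Real.deriv_log]
  have hinv := (hasFDerivAt_ofReal_comp (differentiableAt_inv hpos.ne') hρz).differentiableAt
  have hρc : ContDiffAt ℝ 2 (fun w => (ρ w : ℂ)) z := ofRealCLM.contDiff.contDiffAt.comp z hρ
  simp only [levi, of_apply]
  rw [hlog.wD_eq, wD_mul hinv (hρc.differentiableAt_wDbar ν),
    wD_ofReal_comp (differentiableAt_inv hpos.ne') hρz, deriv_inv]
  push_cast
  ring

theorem levi_log_eq {n : ℕ} {ρ : (Fin n → ℂ) → ℝ} {z : Fin n → ℂ} (hρ : ContDiffAt ℝ 2 ρ z)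
    (hpos : 0 < ρ z) :
    levi (fun w => Real.log (ρ w)) z = (ρ z : ℂ)⁻¹ •
      (levi ρ z - vecMulVec ((ρ z : ℂ)⁻¹ • wD (fun w => (ρ w : ℂ)) z)
        (wDbar (fun w => (ρ w : ℂ)) z)) := by
  ext μ ν
  simp only [levi_log_apply hρ hpos, Matrix.smul_apply, Matrix.sub_apply, vecMulVec_apply,
    Pi.smul_apply, smul_eq_mul]
  ring

theorem det_levi_log_eq_zero_iff {n : ℕ} {ρ : (Fin n → ℂ) → ℝ} {z : Fin n → ℂ}
    (hρ : ContDiffAt ℝ 2 ρ z) (hpos : 0 < ρ z) (hL : IsUnit (levi ρ z).det) {Z : Fin n → ℂ}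
    (hZ : Z ᵥ* levi ρ z = wDbar (fun w => (ρ w : ℂ)) z) :
    (levi (fun w => Real.log (ρ w)) z).det = 0 ↔
      Z ⬝ᵥ wD (fun w => (ρ w : ℂ)) z = (ρ z : ℂ) := by
  have hr : (ρ z : ℂ) ≠ 0 := ofReal_ne_zero.mpr hpos.ne'
  rw [levi_log_eq hρ hpos, det_smul, det_sub_vecMulVec_of_vecMul_eq hL hZ, dotProduct_smul,
    smul_eq_mul]
  simp only [mul_eq_zero, pow_eq_zero_iff', inv_eq_zero, hr, hL.ne_zero, sub_eq_zero, false_and,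
    false_or]
  rw [eq_comm, inv_mul_eq_one₀ hr, eq_comm]

/-- At a strictly pseudoconvex point with `ρ > 0`, the function `log ρ` satisfies the
homogeneous complex Monge–Ampère equation at `z` iff the complex gradient satisfies
`Z(ρ) = ρ` at `z`. -/
theorem MongeAmpere_iff_Zrho_eq_rho (U : Set (Fin 2 → ℂ)) (hU : IsOpen U)
    (ρ : (Fin 2 → ℂ) → ℝ) (hρ : ContDiffOn ℝ 2 ρ U)
    (z : Fin 2 → ℂ) (hz : z ∈ U) (hpos : 0 < ρ z)
    (hPD : (levi ρ z).PosDef)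
    (Z : Fin 2 → ℂ)
    (hZ : ∀ ν : Fin 2, ∑ μ : Fin 2, Z μ * levi ρ z μ ν = wDbar (fun w => (ρ w : ℂ)) z ν) :
    (levi (fun w => Real.log (ρ w)) z).det = 0 ↔
      ∑ μ : Fin 2, Z μ * wD (fun w => (ρ w : ℂ)) z μ = (ρ z : ℂ) :=
  det_levi_log_eq_zero_iff (hρ.contDiffAt (hU.mem_nhds hz)) hpos hPD.det_pos.ne'.isUnit (funext hZ)
end

section
/- Let U ⊆ ℂ² be open and ρ : U → ℝ smooth with ρ > 0 and Levi matrix H(ρ) positive definite on U, satisfying the Monge–Ampère equation Z(ρ) := Σ_μ Z^μ·∂ρ/∂z_μ = ρ on U, where Z is the complex gradient; let L be the (1,0) vector field with components L¹ = ∂ρ/∂z₂, L² = −∂ρ/∂z₁. Then at every z ∈ U there exist η₁, η₂ ∈ ℂ such that −Z̄(Z^μ)(z) = η₁·L^μ(z) and Z(conj(Z^μ))(z) = η₂·conj(L^μ(z)) for μ = 1,2; i.e. the bracket [Z, Z̄] is pointwise a combination η₁·L + η₂·L̄. -/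
open Complex Matrix Topology
open scoped ComplexOrder

/-- The tangential `(1,0)` vector field `L` with components `L¹ = ∂ρ/∂z₂`,
`L² = −∂ρ/∂z₁`. -/
noncomputable def Lfield (ρ : (Fin 2 → ℂ) → ℝ) (z : Fin 2 → ℂ) : Fin 2 → ℂ :=
  ![wD (fun w => (ρ w : ℂ)) z 1, -(wD (fun w => (ρ w : ℂ)) z 0)]

/-- Action of a `(1,0)` vector field `W`: `Wf = Σ_μ W^μ ∂f/∂z_μ`. -/
noncomputable def op10 {n : ℕ} (W : (Fin n → ℂ) → Fin n → ℂ) (f : (Fin n → ℂ) → ℂ)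
    (z : Fin n → ℂ) : ℂ :=
  ∑ μ : Fin n, W z μ * wD f z μ

/-- Action of the conjugate field `W̄`: `W̄f = Σ_μ conj(W^μ) ∂f/∂z̄_μ`. -/
noncomputable def op01 {n : ℕ} (W : (Fin n → ℂ) → Fin n → ℂ) (f : (Fin n → ℂ) → ℂ)
    (z : Fin n → ℂ) : ℂ :=
  ∑ μ : Fin n, (starRingEnd ℂ) (W z μ) * wDbar f z μ

section Helpers

variable {n : ℕ} {U : Set (Fin n → ℂ)} {f g : (Fin n → ℂ) → ℂ} {z : Fin n → ℂ}

lemma myDiffAt (hU : IsOpen U) (hf : ContDiffOn ℝ (⊤ : ℕ∞) f U) (hz : z ∈ U) :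
    DifferentiableAt ℝ f z :=
  (hf.differentiableOn (by simp)).differentiableAt (hU.mem_nhds hz)

lemma contDiffOn_fderiv_apply (hU : IsOpen U) (hf : ContDiffOn ℝ (⊤ : ℕ∞) f U) (v : Fin n → ℂ) :
    ContDiffOn ℝ (⊤ : ℕ∞) (fun w => fderiv ℝ f w v) U :=
  (hf.fderiv_of_isOpen hU (by simp)).clm_apply contDiffOn_const

lemma contDiffOn_wD (hU : IsOpen U) (hf : ContDiffOn ℝ (⊤ : ℕ∞) f U) (μ : Fin n) :
    ContDiffOn ℝ (⊤ : ℕ∞) (fun w => wD f w μ) U := by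
  unfold wD
  exact contDiffOn_const.mul ((contDiffOn_fderiv_apply hU hf _).sub
    (contDiffOn_const.mul (contDiffOn_fderiv_apply hU hf _)))

lemma contDiffOn_wDbar (hU : IsOpen U) (hf : ContDiffOn ℝ (⊤ : ℕ∞) f U) (μ : Fin n) :
    ContDiffOn ℝ (⊤ : ℕ∞) (fun w => wDbar f w μ) U := by
  unfold wDbar
  exact contDiffOn_const.mul ((contDiffOn_fderiv_apply hU hf _).add
    (contDiffOn_const.mul (contDiffOn_fderiv_apply hU hf _)))

lemma wDbar_congr (h : f =ᶠ[𝓝 z] g) (μ : Fin n) : wDbar f z μ = wDbar g z μ := by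
  unfold wDbar; rw [h.fderiv_eq]

lemma wDbar_mul (hf : DifferentiableAt ℝ f z) (hg : DifferentiableAt ℝ g z) (μ : Fin n) :
    wDbar (fun w => f w * g w) z μ = wDbar f z μ * g z + f z * wDbar g z μ := by
  unfold wDbar
  rw [fderiv_fun_mul hf hg]
  simp only [ContinuousLinearMap.add_apply, ContinuousLinearMap.smul_apply, smul_eq_mul]
  ring

lemma wDbar_sub (hf : DifferentiableAt ℝ f z) (hg : DifferentiableAt ℝ g z) (μ : Fin n) :
    wDbar (fun w => f w - g w) z μ = wDbar f z μ - wDbar g z μ := by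
  unfold wDbar
  rw [fderiv_fun_sub hf hg]
  simp only [ContinuousLinearMap.sub_apply]
  ring

lemma wDbar_add (hf : DifferentiableAt ℝ f z) (hg : DifferentiableAt ℝ g z) (μ : Fin n) :
    wDbar (fun w => f w + g w) z μ = wDbar f z μ + wDbar g z μ := by
  unfold wDbar
  rw [fderiv_fun_add hf hg]
  simp only [ContinuousLinearMap.add_apply]
  ring

lemma wDbar_zero (μ : Fin n) : wDbar (fun _ => (0 : ℂ)) z μ = 0 := by
  unfold wDbar
  simp

lemma wD_conj (hf : DifferentiableAt ℝ f z) (μ : Fin n) :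
    wD (fun w => (starRingEnd ℂ) (f w)) z μ = (starRingEnd ℂ) (wDbar f z μ) := by
  have h : fderiv ℝ (fun w => (starRingEnd ℂ) (f w)) z =
      (Complex.conjCLE.toContinuousLinearMap).comp (fderiv ℝ f z) :=
    (Complex.conjCLE.toContinuousLinearMap.hasFDerivAt.comp z hf.hasFDerivAt).fderiv
  unfold wD wDbar
  rw [h]
  simp only [ContinuousLinearMap.coe_comp', Function.comp_apply,
    ContinuousLinearEquiv.coe_coe, Complex.conjCLE_apply, _root_.map_mul, _root_.map_add, Complex.conj_I]
  simp only [map_div₀, _root_.map_one, _root_.map_ofNat]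
  ring

lemma fderiv_fderiv_apply (hU : IsOpen U) (hf : ContDiffOn ℝ (⊤ : ℕ∞) f U) (hz : z ∈ U)
    (v u : Fin n → ℂ) :
    fderiv ℝ (fun w => fderiv ℝ f w u) z v = (fderiv ℝ (fderiv ℝ f) z v) u := by
  have hD2 : DifferentiableAt ℝ (fderiv ℝ f) z :=
    ((hf.fderiv_of_isOpen hU (WithTop.coe_le_coe.mpr le_top : (1 : WithTop ℕ∞) + 1 ≤ ((⊤ : ℕ∞) : WithTop ℕ∞))).differentiableOn one_ne_zero).differentiableAt
      (hU.mem_nhds hz)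
  rw [fderiv_clm_apply hD2 (differentiableAt_const u)]
  simp

lemma sndDeriv_symm (hU : IsOpen U) (hf : ContDiffOn ℝ (⊤ : ℕ∞) f U) (hz : z ∈ U)
    (v u : Fin n → ℂ) :
    (fderiv ℝ (fderiv ℝ f) z v) u = (fderiv ℝ (fderiv ℝ f) z u) v := by
  have hD2 : DifferentiableAt ℝ (fderiv ℝ f) z :=
    ((hf.fderiv_of_isOpen hU (WithTop.coe_le_coe.mpr le_top : (1 : WithTop ℕ∞) + 1 ≤ ((⊤ : ℕ∞) : WithTop ℕ∞))).differentiableOn one_ne_zero).differentiableAt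
      (hU.mem_nhds hz)
  refine second_derivative_symmetric_of_eventually_of_real (f := f) ?_ hD2.hasFDerivAt v u
  filter_upwards [hU.mem_nhds hz] with y hy using
    (myDiffAt hU hf hy).hasFDerivAt

lemma wDbar_wD_comm (hU : IsOpen U) (hf : ContDiffOn ℝ (⊤ : ℕ∞) f U) (hz : z ∈ U) (μ l : Fin n) :
    wDbar (fun w => wD f w μ) z l = wD (fun w => wDbar f w l) z μ := by
  have hD2 : DifferentiableAt ℝ (fderiv ℝ f) z :=
    ((hf.fderiv_of_isOpen hU (WithTop.coe_le_coe.mpr le_top : (1 : WithTop ℕ∞) + 1 ≤ ((⊤ : ℕ∞) : WithTop ℕ∞))).differentiableOn one_ne_zero).differentiableAt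
      (hU.mem_nhds hz)
  have hA : ∀ u : Fin n → ℂ, DifferentiableAt ℝ (fun w => fderiv ℝ f w u) z :=
    fun u => hD2.clm_apply (differentiableAt_const u)
  have key : ∀ (c : ℂ) (u u' v : Fin n → ℂ),
      fderiv ℝ (fun w => (1/2 : ℂ) * (fderiv ℝ f w u + c * fderiv ℝ f w u')) z v =
        (1/2 : ℂ) * ((fderiv ℝ (fderiv ℝ f) z v) u + c * (fderiv ℝ (fderiv ℝ f) z v) u') := by
    intro c u u' v
    rw [fderiv_const_mul ((hA u).fun_add ((hA u').const_mul c)), fderiv_fun_add (hA u) ((hA u').const_mul c),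
      fderiv_const_mul (hA u') c]
    simp only [ContinuousLinearMap.coe_smul', Pi.smul_apply, ContinuousLinearMap.add_apply,
      smul_eq_mul]
    rw [fderiv_fderiv_apply hU hf hz, fderiv_fderiv_apply hU hf hz]
  have hwD : (fun w => wD f w μ) =
      fun w => (1/2 : ℂ) * (fderiv ℝ f w (Pi.single μ 1) + (-Complex.I) * fderiv ℝ f w (Pi.single μ Complex.I)) := by
    funext w; unfold wD; ring
  have hwDbar : (fun w => wDbar f w l) =
      fun w => (1/2 : ℂ) * (fderiv ℝ f w (Pi.single l 1) + Complex.I * fderiv ℝ f w (Pi.single l Complex.I)) := by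
    rfl
  rw [hwD, hwDbar]
  unfold wD wDbar
  simp only [key]
  rw [sndDeriv_symm hU hf hz (Pi.single l 1) (Pi.single μ 1),
    sndDeriv_symm hU hf hz (Pi.single l 1) (Pi.single μ Complex.I),
    sndDeriv_symm hU hf hz (Pi.single l Complex.I) (Pi.single μ 1),
    sndDeriv_symm hU hf hz (Pi.single l Complex.I) (Pi.single μ Complex.I)]
  ring

end Helpers

/-- The bracket `[Z, Z̄]` is pointwise a combination `η₁·L + η₂·L̄`. -/
theorem bracket_Z_Zbar (U : Set (Fin 2 → ℂ)) (hU : IsOpen U)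
    (ρ : (Fin 2 → ℂ) → ℝ) (hρ : ContDiffOn ℝ (⊤ : ℕ∞) ρ U)
    (hpos : ∀ z ∈ U, 0 < ρ z)
    (hPD : ∀ z ∈ U, (levi ρ z).PosDef)
    (Z : (Fin 2 → ℂ) → Fin 2 → ℂ)
    (hZ : ∀ z ∈ U, ∀ ν : Fin 2,
      ∑ μ : Fin 2, Z z μ * levi ρ z μ ν = wDbar (fun w => (ρ w : ℂ)) z ν)
    (hMA : ∀ z ∈ U, ∑ μ : Fin 2, Z z μ * wD (fun w => (ρ w : ℂ)) z μ = (ρ z : ℂ)) :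
    ∀ z ∈ U, ∃ η₁ η₂ : ℂ, ∀ μ : Fin 2,
      -(op01 Z (fun w => Z w μ) z) = η₁ * Lfield ρ z μ ∧
      op10 Z (fun w => (starRingEnd ℂ) (Z w μ)) z =
        η₂ * (starRingEnd ℂ) (Lfield ρ z μ) := by
  intro z hz
  have hρc : ContDiffOn ℝ (⊤ : ℕ∞) (fun w => (ρ w : ℂ)) U :=
    Complex.ofRealCLM.contDiff.comp_contDiffOn hρ
  have hrC : ∀ μ : Fin 2, ContDiffOn ℝ (⊤ : ℕ∞) (fun w => wD (fun w' => (ρ w' : ℂ)) w μ) U :=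
    fun μ => contDiffOn_wD hU hρc μ
  have hbC : ∀ ν : Fin 2, ContDiffOn ℝ (⊤ : ℕ∞) (fun w => wDbar (fun w' => (ρ w' : ℂ)) w ν) U :=
    fun ν => contDiffOn_wDbar hU hρc ν
  have hHC : ∀ μ ν : Fin 2, ContDiffOn ℝ (⊤ : ℕ∞) (fun w => levi ρ w μ ν) U :=
    fun μ ν => contDiffOn_wD hU (hbC ν) μ
  have hrD : ∀ μ : Fin 2, DifferentiableAt ℝ (fun w => wD (fun w' => (ρ w' : ℂ)) w μ) z :=
    fun μ => myDiffAt hU (hrC μ) hz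
  have hbD : ∀ ν : Fin 2, DifferentiableAt ℝ (fun w => wDbar (fun w' => (ρ w' : ℂ)) w ν) z :=
    fun ν => myDiffAt hU (hbC ν) hz
  have hHD : ∀ μ ν : Fin 2, DifferentiableAt ℝ (fun w => levi ρ w μ ν) z :=
    fun μ ν => myDiffAt hU (hHC μ ν) hz
  have hdet : ∀ w ∈ U,
      levi ρ w 0 0 * levi ρ w 1 1 - levi ρ w 0 1 * levi ρ w 1 0 ≠ 0 := by
    intro w hw
    have h := (hPD w hw).det_pos
    rw [Matrix.det_fin_two] at h
    exact h.ne'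
  -- Cramer's rule: explicit formula for Z on U
  have hZ0eq : ∀ w ∈ U, Z w 0 =
      (wDbar (fun w' => (ρ w' : ℂ)) w 0 * levi ρ w 1 1 -
        wDbar (fun w' => (ρ w' : ℂ)) w 1 * levi ρ w 1 0) /
      (levi ρ w 0 0 * levi ρ w 1 1 - levi ρ w 0 1 * levi ρ w 1 0) := by
    intro w hw
    have e0 := hZ w hw 0
    have e1 := hZ w hw 1
    rw [Fin.sum_univ_two] at e0 e1
    rw [eq_div_iff (hdet w hw)]
    linear_combination levi ρ w 1 1 * e0 - levi ρ w 1 0 * e1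
  have hZ1eq : ∀ w ∈ U, Z w 1 =
      (wDbar (fun w' => (ρ w' : ℂ)) w 1 * levi ρ w 0 0 -
        wDbar (fun w' => (ρ w' : ℂ)) w 0 * levi ρ w 0 1) /
      (levi ρ w 0 0 * levi ρ w 1 1 - levi ρ w 0 1 * levi ρ w 1 0) := by
    intro w hw
    have e0 := hZ w hw 0
    have e1 := hZ w hw 1
    rw [Fin.sum_univ_two] at e0 e1
    rw [eq_div_iff (hdet w hw)]
    linear_combination levi ρ w 0 0 * e1 - levi ρ w 0 1 * e0
  have hZD : ∀ μ : Fin 2, DifferentiableAt ℝ (fun w => Z w μ) z := by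
    intro μ
    fin_cases μ
    · have hev : (fun w => Z w 0) =ᶠ[𝓝 z]
          (fun w => (wDbar (fun w' => (ρ w' : ℂ)) w 0 * levi ρ w 1 1 -
            wDbar (fun w' => (ρ w' : ℂ)) w 1 * levi ρ w 1 0) /
          (levi ρ w 0 0 * levi ρ w 1 1 - levi ρ w 0 1 * levi ρ w 1 0)) :=
        Filter.eventually_of_mem (hU.mem_nhds hz) hZ0eq
      have hnum : DifferentiableAt ℝ (fun w => wDbar (fun w' => (ρ w' : ℂ)) w 0 * levi ρ w 1 1 -
          wDbar (fun w' => (ρ w' : ℂ)) w 1 * levi ρ w 1 0) z :=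
        ((hbD 0).mul (hHD 1 1)).sub ((hbD 1).mul (hHD 1 0))
      have hden : DifferentiableAt ℝ (fun w => levi ρ w 0 0 * levi ρ w 1 1 -
          levi ρ w 0 1 * levi ρ w 1 0) z :=
        ((hHD 0 0).mul (hHD 1 1)).sub ((hHD 0 1).mul (hHD 1 0))
      have hq : DifferentiableAt ℝ (fun w =>
          (wDbar (fun w' => (ρ w' : ℂ)) w 0 * levi ρ w 1 1 -
            wDbar (fun w' => (ρ w' : ℂ)) w 1 * levi ρ w 1 0) /
          (levi ρ w 0 0 * levi ρ w 1 1 - levi ρ w 0 1 * levi ρ w 1 0)) z :=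
        by simp only [div_eq_mul_inv]; exact hnum.mul (hden.inv (hdet z hz))
      exact hev.differentiableAt_iff.mpr hq
    · have hev : (fun w => Z w 1) =ᶠ[𝓝 z]
          (fun w => (wDbar (fun w' => (ρ w' : ℂ)) w 1 * levi ρ w 0 0 -
            wDbar (fun w' => (ρ w' : ℂ)) w 0 * levi ρ w 0 1) /
          (levi ρ w 0 0 * levi ρ w 1 1 - levi ρ w 0 1 * levi ρ w 1 0)) :=
        Filter.eventually_of_mem (hU.mem_nhds hz) hZ1eq
      have hnum : DifferentiableAt ℝ (fun w => wDbar (fun w' => (ρ w' : ℂ)) w 1 * levi ρ w 0 0 -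
          wDbar (fun w' => (ρ w' : ℂ)) w 0 * levi ρ w 0 1) z :=
        ((hbD 1).mul (hHD 0 0)).sub ((hbD 0).mul (hHD 0 1))
      have hden : DifferentiableAt ℝ (fun w => levi ρ w 0 0 * levi ρ w 1 1 -
          levi ρ w 0 1 * levi ρ w 1 0) z :=
        ((hHD 0 0).mul (hHD 1 1)).sub ((hHD 0 1).mul (hHD 1 0))
      have hq : DifferentiableAt ℝ (fun w =>
          (wDbar (fun w' => (ρ w' : ℂ)) w 1 * levi ρ w 0 0 -
            wDbar (fun w' => (ρ w' : ℂ)) w 0 * levi ρ w 0 1) /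
          (levi ρ w 0 0 * levi ρ w 1 1 - levi ρ w 0 1 * levi ρ w 1 0)) z :=
        by simp only [div_eq_mul_inv]; exact hnum.mul (hden.inv (hdet z hz))
      exact hev.differentiableAt_iff.mpr hq
  -- key identity: differentiate the Monge–Ampère equation in the anti-holomorphic directions
  have hlevi : ∀ μ ν : Fin 2,
      wD (fun w => wDbar (fun w' => (ρ w' : ℂ)) w ν) z μ = levi ρ z μ ν := fun _ _ => rfl
  have hkey : ∀ l : Fin 2,
      wDbar (fun w => Z w 0) z l * wD (fun w' => (ρ w' : ℂ)) z 0 +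
      wDbar (fun w => Z w 1) z l * wD (fun w' => (ρ w' : ℂ)) z 1 = 0 := by
    intro l
    have hev : (fun w => (Z w 0 * wD (fun w' => (ρ w' : ℂ)) w 0 +
        Z w 1 * wD (fun w' => (ρ w' : ℂ)) w 1) - (ρ w : ℂ)) =ᶠ[𝓝 z] (fun _ => (0 : ℂ)) := by
      filter_upwards [hU.mem_nhds hz] with w hw
      have h := hMA w hw
      rw [Fin.sum_univ_two] at h
      rw [h, sub_self]
    have h0 : wDbar (fun w => (Z w 0 * wD (fun w' => (ρ w' : ℂ)) w 0 +
        Z w 1 * wD (fun w' => (ρ w' : ℂ)) w 1) - (ρ w : ℂ)) z l = 0 := by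
      rw [wDbar_congr hev l, wDbar_zero]
    rw [wDbar_sub (((hZD 0).fun_mul (hrD 0)).fun_add ((hZD 1).fun_mul (hrD 1))) (myDiffAt hU hρc hz) l,
      wDbar_add ((hZD 0).fun_mul (hrD 0)) ((hZD 1).fun_mul (hrD 1)) l,
      wDbar_mul (hZD 0) (hrD 0) l, wDbar_mul (hZD 1) (hrD 1) l,
      wDbar_wD_comm hU hρc hz 0 l, wDbar_wD_comm hU hρc hz 1 l,
      hlevi 0 l, hlevi 1 l] at h0
    have e := hZ z hz l
    rw [Fin.sum_univ_two] at e
    linear_combination h0 - e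
  have hsum : op01 Z (fun w => Z w 0) z * wD (fun w' => (ρ w' : ℂ)) z 0 +
      op01 Z (fun w => Z w 1) z * wD (fun w' => (ρ w' : ℂ)) z 1 = 0 := by
    simp only [op01, Fin.sum_univ_two]
    linear_combination (starRingEnd ℂ) (Z z 0) * hkey 0 + (starRingEnd ℂ) (Z z 1) * hkey 1
  -- the gradient does not vanish
  have hMAz : Z z 0 * wD (fun w' => (ρ w' : ℂ)) z 0 +
      Z z 1 * wD (fun w' => (ρ w' : ℂ)) z 1 = (ρ z : ℂ) := by
    have h := hMA z hz; rwa [Fin.sum_univ_two] at h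
  have hρz : (ρ z : ℂ) ≠ 0 := by exact_mod_cast (hpos z hz).ne'
  have hLne : wD (fun w' => (ρ w' : ℂ)) z 0 ≠ 0 ∨ wD (fun w' => (ρ w' : ℂ)) z 1 ≠ 0 := by
    by_contra h
    push_neg at h
    rw [h.1, h.2] at hMAz
    simp at hMAz
    exact hρz hMAz.symm
  have hL0 : Lfield ρ z 0 = wD (fun w' => (ρ w' : ℂ)) z 1 := rfl
  have hL1 : Lfield ρ z 1 = -(wD (fun w' => (ρ w' : ℂ)) z 0) := rfl
  obtain ⟨η₁, hη₁⟩ : ∃ η₁ : ℂ, ∀ μ : Fin 2,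
      -(op01 Z (fun w => Z w μ) z) = η₁ * Lfield ρ z μ := by
    rcases hLne with h | h
    · refine ⟨op01 Z (fun w => Z w 1) z / wD (fun w' => (ρ w' : ℂ)) z 0, fun μ => ?_⟩
      fin_cases μ
      · show -(op01 Z (fun w => Z w 0) z) =
          op01 Z (fun w => Z w 1) z / wD (fun w' => (ρ w' : ℂ)) z 0 * Lfield ρ z 0
        rw [hL0, div_mul_eq_mul_div, eq_div_iff h]
        linear_combination -hsum
      · show -(op01 Z (fun w => Z w 1) z) =
          op01 Z (fun w => Z w 1) z / wD (fun w' => (ρ w' : ℂ)) z 0 * Lfield ρ z 1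
        rw [hL1]
        field_simp
    · refine ⟨-(op01 Z (fun w => Z w 0) z) / wD (fun w' => (ρ w' : ℂ)) z 1, fun μ => ?_⟩
      fin_cases μ
      · show -(op01 Z (fun w => Z w 0) z) =
          -(op01 Z (fun w => Z w 0) z) / wD (fun w' => (ρ w' : ℂ)) z 1 * Lfield ρ z 0
        rw [hL0]
        field_simp
      · show -(op01 Z (fun w => Z w 1) z) =
          -(op01 Z (fun w => Z w 0) z) / wD (fun w' => (ρ w' : ℂ)) z 1 * Lfield ρ z 1
        rw [hL1, div_mul_eq_mul_div, eq_div_iff h]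
        linear_combination -hsum
  -- conjugation identity
  have hconj : ∀ μ : Fin 2, op10 Z (fun w => (starRingEnd ℂ) (Z w μ)) z =
      (starRingEnd ℂ) (op01 Z (fun w => Z w μ) z) := by
    intro μ
    simp only [op10, op01, Fin.sum_univ_two, _root_.map_add, _root_.map_mul, Complex.conj_conj]
    rw [wD_conj (hZD μ) 0, wD_conj (hZD μ) 1]
  refine ⟨η₁, -((starRingEnd ℂ) η₁), fun μ => ⟨hη₁ μ, ?_⟩⟩
  rw [hconj μ]
  have h := hη₁ μ
  have h2 : op01 Z (fun w => Z w μ) z = -(η₁ * Lfield ρ z μ) := by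
    rw [← h, neg_neg]
  rw [h2]
  simp only [map_neg, _root_.map_mul]
  ring
end
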